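/- If R(z) ∈ ℝ[z,z⁻¹]^{m×n} has full row normal rank m, then for every Borel probability measure P_e on (ℝᵐ)^ℤ there exists a unique Borel probability measure P on the quotient (ℝⁿ)^ℤ / ker∞R (with its quotient topology) such that the pushforward of P under the induced map R̄ : (ℝⁿ)^ℤ / ker∞R → (ℝᵐ)^ℤ, sending the coset of w to R(σ)w, equals P_e. -/

import Mathlib

/-- The shift operator `R(σ)` associated with a Laurent polynomial matrix
`R ∈ ℝ[z,z⁻¹]^{m×n}`, bundled as an ℝ-linear map:
`(R(σ)w)(t)ᵢ = Σⱼ Σ_k coeff_k(Rᵢⱼ) · w(t+k)ⱼ`. -/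
noncomputable def shiftOpL {p n : ℕ} (R : Matrix (Fin p) (Fin n) (LaurentPolynomial ℝ)) :
    (ℤ → Fin n → ℝ) →ₗ[ℝ] (ℤ → Fin p → ℝ) where
  toFun w := fun t i => ∑ j, Finsupp.sum (R i j).coeff fun k c => c * w (t + k) j
  map_add' w w' := by
    funext t i
    simp only [Pi.add_apply, mul_add]
    rw [← Finset.sum_add_distrib]
    exact Finset.sum_congr rfl fun j _ => Finsupp.sum_add
  map_smul' a w := by
    funext t i
    simp only [Pi.smul_apply, smul_eq_mul, RingHom.id_apply]
    rw [Finset.mul_sum]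
    refine Finset.sum_congr rfl fun j _ => ?_
    rw [Finsupp.mul_sum]
    exact Finsupp.sum_congr fun k _ => by ring

/-- The normal rank of a Laurent polynomial matrix: its rank as a matrix over the field of
fractions of `ℝ[z,z⁻¹]`. -/
noncomputable def normalRank {m : Type*} [Fintype m] {n : ℕ}
    (R : Matrix m (Fin n) (LaurentPolynomial ℝ)) : ℕ :=
  Matrix.rank (R.map (algebraMap (LaurentPolynomial ℝ) (FractionRing (LaurentPolynomial ℝ))))

/-!
Full row normal rank gives a Laurent polynomial matrix `S` and a scalar `d ≠ 0` with
`R S = d • 1`. Over `ℂ`, `d` is a unit times a product of factors `z - r`, and each factor has a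
continuous right inverse on sequences: solve `u (t + 1) - r u t = e t` forwards and backwards
from `u 0 = 0`. Taking real parts gives a continuous right inverse of `d(σ)` on real sequences,
so `R(σ)` has the continuous right inverse `S(σ) ∘ d(σ)⁻¹`. Hence `R̄` is a homeomorphism, thus a
Borel isomorphism, and pushing forward along it is a bijection on probability measures.
-/

open Function MeasureTheory

section ContinuousRightInverse

variable {X Y Z : Type*} [TopologicalSpace X] [TopologicalSpace Y] [TopologicalSpace Z]

def HasContinuousRightInverse (f : X → Y) : Prop :=
  ∃ g : Y → X, Continuous g ∧ RightInverse g f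

theorem HasContinuousRightInverse.comp {f : Y → Z} {g : X → Y}
    (hf : HasContinuousRightInverse f) (hg : HasContinuousRightInverse g) :
    HasContinuousRightInverse (f ∘ g) := by
  obtain ⟨f', hf'c, hf'⟩ := hf
  obtain ⟨g', hg'c, hg'⟩ := hg
  exact ⟨g' ∘ f', hg'c.comp hf'c, fun z => by simp [hg' (f' z), hf' z]⟩

theorem HasContinuousRightInverse.of_comp {f : Y → Z} {g : X → Y} (hg : Continuous g)
    (h : HasContinuousRightInverse (f ∘ g)) : HasContinuousRightInverse f := by
  obtain ⟨h', hc, hh'⟩ := h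
  exact ⟨g ∘ h', hg.comp hc, hh'⟩

end ContinuousRightInverse

theorem LinearMap.isHomeomorph_of_quotient_ker {R V W : Type*} [Ring R] [AddCommGroup V]
    [Module R V] [TopologicalSpace V] [AddCommGroup W] [Module R W] [TopologicalSpace W]
    {L : V →ₗ[R] W} (hLc : Continuous L) (hL : HasContinuousRightInverse L)
    {f : V ⧸ LinearMap.ker L → W} (hf : ∀ v, f (Submodule.Quotient.mk v) = L v) :
    IsHomeomorph f := by
  obtain ⟨g, hgc, hg⟩ := hL
  have hfL : f ∘ (LinearMap.ker L).mkQ = L := funext hf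
  refine isHomeomorph_iff_exists_inverse.mpr
    ⟨(Submodule.isQuotientMap_mkQ _).continuous_iff.mpr (hfL ▸ hLc),
      (LinearMap.ker L).mkQ ∘ g, fun q => ?_, fun w => ?_, (Submodule.continuous_mkQ _).comp hgc⟩
  · obtain ⟨v, rfl⟩ := Submodule.Quotient.mk_surjective _ q
    rw [Function.comp_apply, hf, Submodule.mkQ_apply, Submodule.Quotient.eq, LinearMap.mem_ker,
      map_sub, hg (L v), sub_self]
  · simp [hf, hg w]

theorem MeasurableEquiv.existsUnique_isProbabilityMeasure_map_eq {X Y : Type*}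
    [MeasurableSpace X] [MeasurableSpace Y] (e : X ≃ᵐ Y) (ν : Measure Y)
    [IsProbabilityMeasure ν] :
    ∃! μ : Measure X, IsProbabilityMeasure μ ∧ μ.map e = ν := by
  refine ⟨ν.map e.symm, ⟨Measure.isProbabilityMeasure_map e.symm.measurable.aemeasurable,
    e.map_map_symm⟩, fun μ ⟨_, hμ⟩ => ?_⟩
  rw [← hμ, e.map_symm_map]

open LaurentPolynomial Polynomial

section LaurentShift

variable (K : Type*) [CommRing K]

noncomputable def seqShift : Multiplicative ℤ →* Module.End K (ℤ → K) where
  toFun k :=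
    { toFun := fun u t => u (t + k.toAdd)
      map_add' := fun _ _ => rfl
      map_smul' := fun _ _ => rfl }
  map_one' := by ext u t; simp
  map_mul' k l := by ext u t; simp [Module.End.mul_apply, add_assoc]

/-- `p(σ)`: a Laurent polynomial acting on sequences, with `T 1` acting as the left shift
`u ↦ u (· + 1)`. -/
noncomputable def laurentShift : LaurentPolynomial K →ₐ[K] Module.End K (ℤ → K) :=
  AddMonoidAlgebra.lift K _ ℤ (seqShift K)

variable {K}

theorem laurentShift_apply (p : LaurentPolynomial K) (u : ℤ → K) (t : ℤ) :
    laurentShift K p u t = p.coeff.sum fun k c => c * u (t + k) := by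
  rw [laurentShift, AddMonoidAlgebra.lift_apply]
  simp only [Finsupp.sum, LinearMap.coe_sum, Finset.sum_apply, LinearMap.smul_apply]
  rfl

theorem laurentShift_T (k : ℤ) (u : ℤ → K) (t : ℤ) : laurentShift K (T k) u t = u (t + k) := by
  rw [laurentShift_apply, T, AddMonoidAlgebra.coeff_single, Finsupp.sum_single_index] <;> simp

theorem laurentShift_C (c : K) (u : ℤ → K) (t : ℤ) : laurentShift K (C c) u t = c * u t := by
  rw [laurentShift_apply, ← single_eq_C, AddMonoidAlgebra.coeff_single,
    Finsupp.sum_single_index] <;> simp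

theorem coe_laurentShift_mul (p q : LaurentPolynomial K) :
    ⇑(laurentShift K (p * q)) = laurentShift K p ∘ laurentShift K q := by
  rw [map_mul, Module.End.coe_mul]

variable [TopologicalSpace K] [IsTopologicalRing K]

theorem continuous_laurentShift (p : LaurentPolynomial K) : Continuous (laurentShift K p) := by
  refine continuous_pi fun t => ?_
  simp only [laurentShift_apply, Finsupp.sum]
  fun_prop

theorem hasContinuousRightInverse_laurentShift_of_isUnit {q : LaurentPolynomial K}
    (hq : IsUnit q) : HasContinuousRightInverse (laurentShift K q) := by
  obtain ⟨q, rfl⟩ := hq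
  refine ⟨laurentShift K ↑q⁻¹, continuous_laurentShift _, fun e => ?_⟩
  rw [← comp_apply (f := laurentShift K q), ← coe_laurentShift_mul, Units.mul_inv, map_one,
    Module.End.one_apply]

end LaurentShift

section FirstOrderRecurrence

variable {K : Type*} [Field K]

noncomputable def firstOrderSolNat (r : K) (e : ℤ → K) : ℕ → K
  | 0 => 0
  | n + 1 => r * firstOrderSolNat r e n + e n

noncomputable def firstOrderSolNegSucc (r : K) (e : ℤ → K) : ℕ → K
  | 0 => -e (-1) * r⁻¹
  | n + 1 => (firstOrderSolNegSucc r e n - e (Int.negSucc (n + 1))) * r⁻¹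

/-- The solution of `u (t + 1) - r * u t = e t` with `u 0 = 0`, obtained by running the
recurrence forwards for `t ≥ 0` and, dividing by `r`, backwards for `t < 0`. -/
noncomputable def firstOrderSol (r : K) (e : ℤ → K) : ℤ → K
  | .ofNat n => firstOrderSolNat r e n
  | .negSucc n => firstOrderSolNegSucc r e n

theorem firstOrderSol_add_one_sub {r : K} (hr : r ≠ 0) (e : ℤ → K) (t : ℤ) :
    firstOrderSol r e (t + 1) - r * firstOrderSol r e t = e t := by
  match t with
  | .ofNat n =>
    show firstOrderSolNat r e (n + 1) - r * firstOrderSolNat r e n = e n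
    rw [firstOrderSolNat]; ring
  | .negSucc 0 =>
    show firstOrderSolNat r e 0 - r * firstOrderSolNegSucc r e 0 = e (-1)
    rw [firstOrderSolNat, firstOrderSolNegSucc]; field_simp; ring
  | .negSucc (n + 1) =>
    show firstOrderSolNegSucc r e n - r * firstOrderSolNegSucc r e (n + 1) = e (.negSucc (n + 1))
    rw [firstOrderSolNegSucc]; field_simp; ring

variable [TopologicalSpace K] [IsTopologicalRing K]

theorem continuous_firstOrderSol (r : K) : Continuous (firstOrderSol r) := by
  refine continuous_pi fun t => ?_
  match t with
  | .ofNat n =>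
    show Continuous fun e => firstOrderSolNat r e n
    induction n with
    | zero => exact continuous_const
    | succ n ih => exact (continuous_const.mul ih).add (continuous_apply _)
  | .negSucc n =>
    show Continuous fun e => firstOrderSolNegSucc r e n
    induction n with
    | zero => exact (continuous_apply _).neg.mul continuous_const
    | succ n ih => exact (ih.sub (continuous_apply _)).mul continuous_const

theorem hasContinuousRightInverse_laurentShift_X_sub_C (r : K) :
    HasContinuousRightInverse (laurentShift K (toLaurent (X - Polynomial.C r))) := by
  rcases eq_or_ne r 0 with rfl | hr
  · simpa using hasContinuousRightInverse_laurentShift_of_isUnit (isUnit_T (R := K) 1)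
  refine ⟨firstOrderSol r, continuous_firstOrderSol r, fun e => funext fun t => ?_⟩
  simp only [map_sub, Polynomial.toLaurent_X, Polynomial.toLaurent_C, LinearMap.sub_apply,
    Pi.sub_apply, laurentShift_T, laurentShift_C, firstOrderSol_add_one_sub hr]

end FirstOrderRecurrence

theorem hasContinuousRightInverse_laurentShift {K : Type*} [Field K] [IsAlgClosed K]
    [TopologicalSpace K] [IsTopologicalRing K] {q : LaurentPolynomial K} (hq : q ≠ 0) :
    HasContinuousRightInverse (laurentShift K q) := by
  obtain ⟨k, p, hp⟩ := q.exists_T_pow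
  have hq_eq : q = toLaurent p * T (-k : ℤ) := by
    rw [hp, mul_assoc, ← T_add]; simp
  have hp0 : p ≠ 0 := by
    rintro rfl
    exact hq (by simpa [(isUnit_T (k : ℤ)).ne_zero] using hp.symm)
  rw [hq_eq, (IsAlgClosed.splits p).eq_prod_roots, coe_laurentShift_mul, map_mul toLaurent,
    coe_laurentShift_mul, map_multiset_prod, Multiset.map_map]
  refine .comp (.comp ?_ ?_) (hasContinuousRightInverse_laurentShift_of_isUnit (isUnit_T _))
  · exact hasContinuousRightInverse_laurentShift_of_isUnit
      (((isUnit_iff_ne_zero.mpr (leadingCoeff_ne_zero.mpr hp0)).map Polynomial.C).map toLaurent)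
  · refine Multiset.prod_induction (fun q => HasContinuousRightInverse (laurentShift K q)) _
      (fun a b ha hb => ?_) ?_ fun a ha => ?_
    · rw [coe_laurentShift_mul]; exact ha.comp hb
    · exact ⟨id, continuous_id, fun _ => by simp⟩
    · obtain ⟨r, -, rfl⟩ := Multiset.mem_map.mp ha
      exact hasContinuousRightInverse_laurentShift_X_sub_C r

theorem re_laurentShift_map_ofReal (d : LaurentPolynomial ℝ) (v : ℤ → ℂ) (t : ℤ) :
    (laurentShift ℂ (AddMonoidAlgebra.mapRingHom ℤ Complex.ofRealHom d) v t).re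
      = laurentShift ℝ d (fun s => (v s).re) t := by
  rw [laurentShift_apply, laurentShift_apply, AddMonoidAlgebra.coe_mapRingHom,
    AddMonoidAlgebra.coeff_map, Finsupp.sum_mapRange_index (by simp), Finsupp.sum, Finsupp.sum,
    Complex.re_sum]
  simp

theorem hasContinuousRightInverse_laurentShift_real {d : LaurentPolynomial ℝ} (hd : d ≠ 0) :
    HasContinuousRightInverse (laurentShift ℝ d) := by
  have hdC : AddMonoidAlgebra.mapRingHom ℤ Complex.ofRealHom d ≠ 0 :=
    (map_ne_zero_iff _ (AddMonoidAlgebra.map_injective _ Complex.ofReal_injective)).mpr hd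
  obtain ⟨ψ, hψc, hψ⟩ := hasContinuousRightInverse_laurentShift hdC
  refine ⟨fun e t => (ψ (fun s => e s) t).re, by fun_prop, fun e => funext fun t => ?_⟩
  rw [← re_laurentShift_map_ofReal, hψ, Complex.ofReal_re]

theorem Matrix.exists_mul_eq_one_of_rank_eq_card {K m n : Type*} [Field K] [Fintype m]
    [DecidableEq m] [Fintype n] {A : Matrix m n K} (hA : A.rank = Fintype.card m) :
    ∃ B : Matrix n m K, A * B = 1 := by
  refine mulVec_surjective_iff_exists_right_inverse.mp ?_
  change Function.Surjective A.mulVecLin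
  rw [← LinearMap.range_eq_top]
  exact Submodule.eq_top_of_finrank_eq (by rwa [Module.finrank_fintype_fun_eq_card])

theorem Matrix.exists_mul_eq_smul_one_of_map_mul_eq_one {A K m n : Type*} [CommRing A]
    [IsDomain A] [Field K] [Algebra A K] [IsFractionRing A K] [Fintype m] [DecidableEq m]
    [Fintype n] {R : Matrix m n A} {B : Matrix n m K} (hB : R.map (algebraMap A K) * B = 1) :
    ∃ (S : Matrix n m A) (d : A), d ≠ 0 ∧ R * S = d • (1 : Matrix m m A) := by
  obtain ⟨b, hb⟩ := IsLocalization.exist_integer_multiples_of_finite (nonZeroDivisors A)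
    fun ji : n × m => B ji.1 ji.2
  choose S hS using hb
  refine ⟨Matrix.of fun j i => S (j, i), b, nonZeroDivisors.coe_ne_zero b,
    Matrix.map_injective (IsFractionRing.injective A K) ?_⟩
  have hSB : (Matrix.of fun j i => S (j, i)).map (algebraMap A K) = algebraMap A K b • B := by
    ext j i
    exact (hS (j, i)).trans (Algebra.smul_def _ _)
  dsimp only
  rw [Matrix.map_mul, hSB, Matrix.mul_smul, hB, Matrix.map_smul' _ _ _ (map_mul _),
    Matrix.map_one _ (map_zero _) (map_one _)]

theorem exists_mul_eq_smul_one_of_normalRank_eq {m n : ℕ}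
    {R : Matrix (Fin m) (Fin n) (LaurentPolynomial ℝ)} (hrk : normalRank R = m) :
    ∃ (S : Matrix (Fin n) (Fin m) (LaurentPolynomial ℝ)) (d : LaurentPolynomial ℝ),
      d ≠ 0 ∧ R * S = d • (1 : Matrix (Fin m) (Fin m) (LaurentPolynomial ℝ)) := by
  obtain ⟨B, hB⟩ := Matrix.exists_mul_eq_one_of_rank_eq_card (hrk.trans (Fintype.card_fin m).symm)
  exact Matrix.exists_mul_eq_smul_one_of_map_mul_eq_one hB

section ShiftOpL

variable {p q n : ℕ}

theorem shiftOpL_apply (R : Matrix (Fin p) (Fin n) (LaurentPolynomial ℝ)) (w : ℤ → Fin n → ℝ)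
    (t : ℤ) (i : Fin p) :
    shiftOpL R w t i = ∑ j, laurentShift ℝ (R i j) (fun s => w s j) t := by
  simp only [laurentShift_apply]
  rfl

theorem continuous_shiftOpL (R : Matrix (Fin p) (Fin n) (LaurentPolynomial ℝ)) :
    Continuous (shiftOpL R) := by
  refine continuous_pi fun t => continuous_pi fun i => ?_
  simp only [shiftOpL_apply]
  exact continuous_finsetSum _ fun j _ => (continuous_apply t).comp
    ((continuous_laurentShift _).comp (by fun_prop))

theorem shiftOpL_mul (A : Matrix (Fin p) (Fin q) (LaurentPolynomial ℝ))
    (B : Matrix (Fin q) (Fin n) (LaurentPolynomial ℝ)) :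
    shiftOpL (A * B) = shiftOpL A ∘ₗ shiftOpL B := by
  ext w t i
  have hB : ∀ j, (fun s => shiftOpL B w s j) = ∑ l, laurentShift ℝ (B j l) fun s => w s l :=
    fun j => funext fun s => by rw [shiftOpL_apply, Finset.sum_apply]
  rw [LinearMap.comp_apply, shiftOpL_apply, shiftOpL_apply]
  simp only [hB, Matrix.mul_apply, map_sum, map_mul, Module.End.mul_apply, LinearMap.coe_sum,
    Finset.sum_apply]
  exact Finset.sum_comm

theorem shiftOpL_smul_one_apply (d : LaurentPolynomial ℝ) (v : ℤ → Fin p → ℝ) (t : ℤ)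
    (i : Fin p) :
    shiftOpL (d • (1 : Matrix (Fin p) (Fin p) (LaurentPolynomial ℝ))) v t i
      = laurentShift ℝ d (fun s => v s i) t := by
  rw [shiftOpL_apply, Finset.sum_eq_single i (fun j _ hj => by simp [Ne.symm hj]) (by simp)]
  simp

theorem hasContinuousRightInverse_shiftOpL_smul_one {d : LaurentPolynomial ℝ} (hd : d ≠ 0) :
    HasContinuousRightInverse
      (shiftOpL (d • (1 : Matrix (Fin p) (Fin p) (LaurentPolynomial ℝ)))) := by
  obtain ⟨ψ, hψc, hψ⟩ := hasContinuousRightInverse_laurentShift_real hd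
  refine ⟨fun v t i => ψ (fun s => v s i) t, by fun_prop, fun v => ?_⟩
  ext t i
  rw [shiftOpL_smul_one_apply]
  exact congrFun (hψ _) t

theorem hasContinuousRightInverse_shiftOpL {R : Matrix (Fin p) (Fin n) (LaurentPolynomial ℝ)}
    (hrk : normalRank R = p) : HasContinuousRightInverse (shiftOpL R) := by
  obtain ⟨S, d, hd, hRS⟩ := exists_mul_eq_smul_one_of_normalRank_eq hrk
  refine .of_comp (continuous_shiftOpL S) ?_
  rw [← LinearMap.coe_comp, ← shiftOpL_mul, hRS]
  exact hasContinuousRightInverse_shiftOpL_smul_one hd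

end ShiftOpL

/-- If `R(z) ∈ ℝ[z,z⁻¹]^{m×n}` has full row normal rank `m`, then for every
Borel probability measure `P_e` on `(ℝᵐ)^ℤ` there exists a unique Borel probability measure
`P` on the quotient `(ℝⁿ)^ℤ / ker∞R` (with its quotient topology) such that the pushforward
of `P` under the induced map `R̄ : (ℝⁿ)^ℤ / ker∞R → (ℝᵐ)^ℤ` (sending the coset of `w` to
`R(σ)w`) equals `P_e`. -/
theorem pushforward_probability_measure_exists_unique (m n : ℕ)
    (R : Matrix (Fin m) (Fin n) (LaurentPolynomial ℝ))
    (hrk : normalRank R = m)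
    (Rbar : ((ℤ → Fin n → ℝ) ⧸ LinearMap.ker (shiftOpL R)) → (ℤ → Fin m → ℝ))
    (hRbar : ∀ w : ℤ → Fin n → ℝ, Rbar (Submodule.Quotient.mk w) = shiftOpL R w)
    (Pe : @MeasureTheory.Measure (ℤ → Fin m → ℝ) (borel (ℤ → Fin m → ℝ)))
    (hPe : @MeasureTheory.IsProbabilityMeasure _ (borel (ℤ → Fin m → ℝ)) Pe) :
    ∃! P : @MeasureTheory.Measure ((ℤ → Fin n → ℝ) ⧸ LinearMap.ker (shiftOpL R))
        (borel ((ℤ → Fin n → ℝ) ⧸ LinearMap.ker (shiftOpL R))),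
      @MeasureTheory.IsProbabilityMeasure _
        (borel ((ℤ → Fin n → ℝ) ⧸ LinearMap.ker (shiftOpL R))) P ∧
      @MeasureTheory.Measure.map _ _
        (borel ((ℤ → Fin n → ℝ) ⧸ LinearMap.ker (shiftOpL R)))
        (borel (ℤ → Fin m → ℝ)) Rbar P = Pe := by
  let _ := borel (ℤ → Fin m → ℝ)
  have : BorelSpace (ℤ → Fin m → ℝ) := ⟨rfl⟩
  let _ := borel ((ℤ → Fin n → ℝ) ⧸ LinearMap.ker (shiftOpL R))
  have : BorelSpace ((ℤ → Fin n → ℝ) ⧸ LinearMap.ker (shiftOpL R)) := ⟨rfl⟩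
  have hRbar_homeo : IsHomeomorph Rbar := LinearMap.isHomeomorph_of_quotient_ker
    (continuous_shiftOpL R) (hasContinuousRightInverse_shiftOpL hrk) hRbar
  exact (hRbar_homeo.homeomorph Rbar).toMeasurableEquiv.existsUnique_isProbabilityMeasure_map_eq Pe
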